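/- In the threshold activation model on a tree T, if the edge (v,w) is removed splitting T into subtrees T₁ (containing w) and T₂ (containing v), and a pervading link vector S for T activates v strictly after w, then the restriction of S to the nodes of T₁ is itself a pervading link vector for T₁ (with thresholds unchanged). -/

import Mathlib

open Finset
open scoped Classical

/-- Threshold activation process: `act G t s j` is the set of nodes active at step `j`,
given link vector `s` (partial incentives from external influencers). -/
noncomputable def act {V : Type*} [Fintype V] (G : SimpleGraph V) (t s : V → ℕ) :
    ℕ → Finset V
  | 0 => Finset.univ.filter (fun v => t v ≤ s v)
  | (j+1) => act G t s j ∪ Finset.univ.filter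
      (fun v => t v ≤ s v + ((act G t s j).filter (fun u => G.Adj u v)).card)

/-- A link vector `s` is pervading for `(G, t)` with `k` external influencers if each node
receives at most `k` links and the process eventually activates every node. -/
def Pervading {V : Type*} [Fintype V] (G : SimpleGraph V) (t s : V → ℕ) (k : ℕ) : Prop :=
  (∀ v, s v ≤ k) ∧ ∃ j, act G t s j = Finset.univ

/-!
The only edge leaving `T₁` is `(v, w)`, and by the time `v` is active `w` already is. Hence a
node of `T₁` that is not yet active has all its active neighbours inside `T₁`, so by induction
on the round every node of `T₁` active in `T` is active in the restricted process no later.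
-/

section Activation

variable {V : Type*} {G : SimpleGraph V}

lemma card_filter_adj_le_card_filter_induce_adj {A : Set V} {B : Finset V} {B' : Finset A}
    {u : V} (hu : u ∈ A) (h : ∀ x ∈ B, G.Adj x u → ∃ hx : x ∈ A, ⟨x, hx⟩ ∈ B') :
    #{x ∈ B | G.Adj x u} ≤ #{y ∈ B' | (G.induce A).Adj y ⟨u, hu⟩} := by
  calc #{x ∈ B | G.Adj x u}
      ≤ #(image Subtype.val {y ∈ B' | (G.induce A).Adj y ⟨u, hu⟩}) := by
        refine card_le_card fun x hx => ?_
        rw [mem_filter] at hx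
        obtain ⟨hxA, hxB'⟩ := h x hx.1 hx.2
        exact mem_image.2 ⟨⟨x, hxA⟩, mem_filter.2 ⟨hxB', hx.2⟩, rfl⟩
    _ ≤ _ := card_image_le

variable [Fintype V] {t s : V → ℕ}

lemma act_mono : Monotone (act G t s) :=
  monotone_nat_of_le_succ fun _ => by rw [act]; exact subset_union_left

lemma mem_act_succ {n : ℕ} {u : V} :
    u ∈ act G t s (n + 1) ↔ u ∈ act G t s n ∨ t u ≤ s u + #{x ∈ act G t s n | G.Adj x u} := by
  rw [act]; simp

lemma mem_act_induce_of_mem_act {A : Set V}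
    (hA : ∀ n u x, u ∈ A → x ∉ A → G.Adj x u → x ∈ act G t s n → u ∈ act G t s n)
    {m : ℕ} {u : V} (hu : u ∈ A) (h : u ∈ act G t s m) :
    (⟨u, hu⟩ : A) ∈ act (G.induce A) (fun y => t y) (fun y => s y) m := by
  induction m generalizing u with
  | zero => simpa [act] using h
  | succ n ih =>
    rw [mem_act_succ] at h ⊢
    by_cases hprev : u ∈ act G t s n
    · exact Or.inl (ih hu hprev)
    refine Or.inr ((h.resolve_left hprev).trans (Nat.add_le_add_left ?_ _))
    refine card_filter_adj_le_card_filter_induce_adj hu fun x hx hxu => ?_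
    have hxA : x ∈ A := by_contra fun hxA => hprev (hA n u x hu hxA hxu hx)
    exact ⟨hxA, ih hxA hx⟩

end Activation

lemma SimpleGraph.eq_and_eq_of_adj_of_not_reachable_deleteEdges {V : Type*}
    {G : SimpleGraph V} {v w u x : V} (hu : (G.deleteEdges {s(v, w)}).Reachable w u)
    (hx : ¬ (G.deleteEdges {s(v, w)}).Reachable w x) (hxu : G.Adj x u) : x = v ∧ u = w := by
  by_cases he : s(x, u) = s(v, w)
  · rcases Sym2.eq_iff.mp he with h | ⟨rfl, -⟩
    · exact h
    · exact absurd .rfl hx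
  · refine absurd (hu.trans (Adj.reachable ?_)) hx
    rw [deleteEdges_adj, Set.mem_singleton_iff, Sym2.eq_swap]
    exact ⟨hxu.symm, he⟩

theorem tree_split_restriction_pervades_general {V : Type*} [Fintype V]
    (G : SimpleGraph V) (t s : V → ℕ) (k : ℕ)
    (v w : V)
    (hperv : Pervading G t s k)
    -- `v` is activated strictly after `w`
    (hafter : ∃ j, w ∈ act G t s j ∧ v ∉ act G t s j)
    -- `A` is the vertex set of the subtree `T₁` containing `w` obtained by deleting
    -- the edge `(v, w)`
    (A : Set V) (hA : A = {u : V | (G.deleteEdges {s(v, w)}).Reachable w u}) :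
    Pervading (SimpleGraph.induce A G) (fun u => t u.val) (fun u => s u.val) k := by
  obtain ⟨j, hwj, hvj⟩ := hafter
  have hboundary : ∀ n u x, u ∈ A → x ∉ A → G.Adj x u → x ∈ act G t s n → u ∈ act G t s n := by
    intro n u x hu hx hxu hxn
    subst hA
    obtain ⟨rfl, rfl⟩ := SimpleGraph.eq_and_eq_of_adj_of_not_reachable_deleteEdges hu hx hxu
    exact act_mono (not_le.1 fun h => hvj (act_mono h hxn)).le hwj
  obtain ⟨J, hJ⟩ := hperv.2
  exact ⟨fun u => hperv.1 u, J, eq_univ_iff_forall.2 fun u =>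
    mem_act_induce_of_mem_act hboundary u.2 (hJ ▸ mem_univ _)⟩

theorem tree_split_restriction_pervades {V : Type*} [Fintype V] [DecidableEq V]
    (G : SimpleGraph V) (hT : G.IsTree) (t s : V → ℕ) (k : ℕ)
    (v w : V) (hadj : G.Adj v w)
    (hperv : Pervading G t s k)
    -- `v` is activated strictly after `w`
    (hafter : ∃ j, w ∈ act G t s j ∧ v ∉ act G t s j)
    -- `A` is the vertex set of the subtree `T₁` containing `w` obtained by deleting
    -- the edge `(v, w)`
    (A : Set V) (hA : A = {u : V | (G.deleteEdges {s(v, w)}).Reachable w u}) :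
    Pervading (SimpleGraph.induce A G) (fun u => t u.val) (fun u => s u.val) k :=
  tree_split_restriction_pervades_general G t s k v w hperv hafter A hA
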